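/- arXiv:1502.07102 — 4 statements merged into one kernel-verified Lean document; each statement's English description precedes it below -/
import Mathlib

section
/- Let E be a real normed space, Q ∈ E, and let g : [0,∞) → E be continuous with g(s) → Q as s → ∞. Then sup_{t ∈ (0,1]} t·‖g(T) − g(tT)‖ → 0 as T → ∞. -/
open Filter

/-- Deterministic lemma underlying `sup_{0≤t≤1} ‖t·E₂ − Q_{tT}·Q_T⁻¹‖ → 0` in the proof of
the Brownian-bridge limit for the CIR change-point test process: if `g : [0,∞) → E` is
continuous and `g(s) → Q` as `s → ∞`, then `sup_{t ∈ (0,1]} t·‖g(T) − g(tT)‖ → 0` as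
`T → ∞` (formulated as: for every `ε > 0`, eventually in `T`, `t·‖g(T) − g(tT)‖ ≤ ε`
uniformly in `t ∈ (0,1]`). -/
theorem sup_scaled_difference_tendsto_zero
    {E : Type*} [NormedAddCommGroup E] [NormedSpace ℝ E]
    (g : ℝ → E) (Q : E)
    (hg_cont : ContinuousOn g (Set.Ici (0 : ℝ)))
    (hg_lim : Tendsto g atTop (nhds Q)) :
    ∀ ε > 0, ∃ T₀ : ℝ, ∀ T ≥ T₀, ∀ t ∈ Set.Ioc (0 : ℝ) 1,
      t * ‖g T - g (t * T)‖ ≤ ε := by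
  intro ε hε
  -- Choose M with ‖g s - Q‖ ≤ ε/2 for s ≥ M
  have h2 : (0:ℝ) < ε / 2 := by linarith
  obtain ⟨M, hM⟩ := (Metric.tendsto_atTop.mp hg_lim (ε/2) h2)
  set M' := max M 0 with hM'
  have hM'0 : (0:ℝ) ≤ M' := le_max_right _ _
  -- Bound g on [0, M']
  obtain ⟨C, hC⟩ := (isCompact_Icc (a := (0:ℝ)) (b := M')).exists_bound_of_continuousOn
    (hg_cont.mono (fun x hx => hx.1))
  have hCQ : ∀ s ≥ M, ‖g s‖ ≤ ‖Q‖ + ε/2 := by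
    intro s hs
    have := hM s hs
    have : ‖g s - Q‖ ≤ ε/2 := le_of_lt (by simpa [dist_eq_norm] using this)
    calc ‖g s‖ = ‖g s - Q + Q‖ := by rw [sub_add_cancel]
      _ ≤ ‖g s - Q‖ + ‖Q‖ := norm_add_le _ _
      _ ≤ ‖Q‖ + ε/2 := by linarith
  set B := max C (‖Q‖ + ε/2) with hB
  have hBnn : 0 ≤ B := le_trans (by positivity) (le_max_right _ _)
  refine ⟨max (max M' 1) (M' * (2 * B) / ε + 1), ?_⟩
  intro T hT t ht
  obtain ⟨ht1, ht2⟩ := ht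
  · have hTM : T ≥ M' := le_trans (le_trans (le_max_left _ _) (le_max_left _ _)) hT
    have hT1 : T ≥ 1 := le_trans (le_trans (le_max_right _ _) (le_max_left _ _)) hT
    have hT0 : 0 < T := lt_of_lt_of_le one_pos hT1
    have hTB : T ≥ M' * (2 * B) / ε + 1 := le_trans (le_max_right _ _) hT
    have hgT : ‖g T - Q‖ ≤ ε/2 := le_of_lt (by
      simpa [dist_eq_norm] using hM T (le_trans (le_max_left M 0) hTM))
    rcases le_or_gt M' (t * T) with hc | hc
    · -- t*T ≥ M', use the limit bound on both
      have hgtT : ‖g (t * T) - Q‖ ≤ ε/2 := le_of_lt (by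
        simpa [dist_eq_norm] using hM (t * T) (le_trans (le_max_left M 0) hc))
      have : ‖g T - g (t * T)‖ ≤ ε := by
        calc ‖g T - g (t * T)‖ = ‖(g T - Q) - (g (t * T) - Q)‖ := by rw [sub_sub_sub_cancel_right]
          _ ≤ ‖g T - Q‖ + ‖g (t * T) - Q‖ := norm_sub_le _ _
          _ ≤ ε := by linarith
      calc t * ‖g T - g (t * T)‖ ≤ 1 * ‖g T - g (t * T)‖ := by
            apply mul_le_mul_of_nonneg_right ht2 (norm_nonneg _)
        _ = ‖g T - g (t * T)‖ := one_mul _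
        _ ≤ ε := this
    · -- t*T < M': t < M'/T, norms bounded by B
      have htT0 : 0 ≤ t * T := le_of_lt (mul_pos ht1 hT0)
      have hb1 : ‖g (t * T)‖ ≤ B := le_trans (hC (t * T) ⟨htT0, le_of_lt hc⟩) (le_max_left _ _)
      have hb2 : ‖g T‖ ≤ B :=
        le_trans (hCQ T (le_trans (le_max_left M 0) hTM)) (le_max_right _ _)
    -- t ≤ M'/T
      have htle : t ≤ M' / T := by
        rw [le_div_iff₀ hT0]; exact le_of_lt hc
      have hnorm : ‖g T - g (t * T)‖ ≤ 2 * B := by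
        calc ‖g T - g (t * T)‖ ≤ ‖g T‖ + ‖g (t * T)‖ := norm_sub_le _ _
          _ ≤ 2 * B := by linarith
      calc t * ‖g T - g (t * T)‖ ≤ (M' / T) * (2 * B) := by
            apply mul_le_mul htle hnorm (norm_nonneg _) (by positivity)
        _ = M' * (2 * B) / T := by ring
        _ ≤ ε := by
            rw [div_le_iff₀ hT0]
            have hε' : M' * (2 * B) / ε ≤ T - 1 := by linarith
            have : M' * (2 * B) ≤ ε * (T - 1) := by
              rw [div_le_iff₀ hε] at hε'; linarith [hε']
            nlinarith
end

section
/- Let Q′ and Q″ be symmetric invertible real 2×2 matrices, ρ ∈ (0,1), a′, a″ ∈ ℝ, and θ′, θ″ ∈ ℝ² with θ′ − θ″ = (a′ − a″)·e₁, where e₁ = (1,0)ᵀ. Suppose S := ρ·Q′ + (1−ρ)·Q″ and R := (ρ·Q′)^{-1} + ((1−ρ)·Q″)^{-1} are invertible. Define θ̃ := S^{-1}·( ρ·Q′·θ′ + (1−ρ)·Q″·θ″ ) and ψ := (a′ − a″)·⟨e₁, R^{-1}·e₁⟩. Then ⟨θ′ − θ̃, Q′·e₁⟩ = ψ/ρ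 and ⟨θ″ − θ̃, Q″·e₁⟩ = −ψ/(1−ρ). -/
open Matrix

private lemma dp_aux {n : Type*} [Fintype n] (M : Matrix n n ℝ) (x y : n → ℝ) :
    (M *ᵥ x) ⬝ᵥ y = x ⬝ᵥ (Mᵀ *ᵥ y) := by
  rw [Matrix.dotProduct_mulVec, Matrix.vecMul_transpose]

/-- Matrix-algebra identities (equations (theta'_psi) and (theta''_psi) of the paper) used in
proving consistency of the CIR change-point test: with symmetric invertible `Q′, Q″`,
`θ′ − θ″ = (a′ − a″)·e₁`, `S = ρQ′ + (1−ρ)Q″`, `R = (ρQ′)⁻¹ + ((1−ρ)Q″)⁻¹` invertible,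
`θ̃ = S⁻¹(ρQ′θ′ + (1−ρ)Q″θ″)` and `ψ = (a′ − a″)·⟨e₁, R⁻¹e₁⟩`, one has
`⟨θ′ − θ̃, Q′e₁⟩ = ψ/ρ` and `⟨θ″ − θ̃, Q″e₁⟩ = −ψ/(1−ρ)`. -/
theorem cir_psi_identities
    (Q' Q'' : Matrix (Fin 2) (Fin 2) ℝ)
    (hQ'symm : Q'.IsSymm) (hQ''symm : Q''.IsSymm)
    (hQ' : IsUnit Q'.det) (hQ'' : IsUnit Q''.det)
    (ρ : ℝ) (hρ : ρ ∈ Set.Ioo (0 : ℝ) 1)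
    (a' a'' : ℝ) (θ' θ'' : Fin 2 → ℝ)
    (hθ : θ' - θ'' = (a' - a'') • (![1, 0] : Fin 2 → ℝ))
    (hS : IsUnit (ρ • Q' + (1 - ρ) • Q'').det)
    (hR : IsUnit ((ρ • Q')⁻¹ + ((1 - ρ) • Q'')⁻¹).det) :
    (θ' - (ρ • Q' + (1 - ρ) • Q'')⁻¹ *ᵥ (ρ • (Q' *ᵥ θ') + (1 - ρ) • (Q'' *ᵥ θ'')))
        ⬝ᵥ (Q' *ᵥ (![1, 0] : Fin 2 → ℝ))
      = (a' - a'') *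
          ((![1, 0] : Fin 2 → ℝ) ⬝ᵥ
            (((ρ • Q')⁻¹ + ((1 - ρ) • Q'')⁻¹)⁻¹ *ᵥ (![1, 0] : Fin 2 → ℝ))) / ρ
    ∧ (θ'' - (ρ • Q' + (1 - ρ) • Q'')⁻¹ *ᵥ (ρ • (Q' *ᵥ θ') + (1 - ρ) • (Q'' *ᵥ θ'')))
        ⬝ᵥ (Q'' *ᵥ (![1, 0] : Fin 2 → ℝ))
      = -((a' - a'') *
          ((![1, 0] : Fin 2 → ℝ) ⬝ᵥ
            (((ρ • Q')⁻¹ + ((1 - ρ) • Q'')⁻¹)⁻¹ *ᵥ (![1, 0] : Fin 2 → ℝ)))) / (1 - ρ) := by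
  obtain ⟨hρ0, hρ1⟩ := hρ
  have hρ0' : ρ ≠ 0 := ne_of_gt hρ0
  have h1ρ : (1 : ℝ) - ρ ≠ 0 := sub_ne_zero.mpr (ne_of_gt hρ1)
  set e : Fin 2 → ℝ := ![1, 0] with he
  set A : Matrix (Fin 2) (Fin 2) ℝ := ρ • Q' with hA
  set B : Matrix (Fin 2) (Fin 2) ℝ := (1 - ρ) • Q'' with hB
  set S : Matrix (Fin 2) (Fin 2) ℝ := A + B with hSdef
  have hAdet : IsUnit A.det := by
    rw [hA, Matrix.det_smul]
    exact (IsUnit.pow _ (isUnit_iff_ne_zero.mpr hρ0')).mul hQ'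
  have hBdet : IsUnit B.det := by
    rw [hB, Matrix.det_smul]
    exact (IsUnit.pow _ (isUnit_iff_ne_zero.mpr h1ρ)).mul hQ''
  -- Symmetry of S⁻¹
  have hAT : Aᵀ = A := by rw [hA, Matrix.transpose_smul, hQ'symm.eq]
  have hBT : Bᵀ = B := by rw [hB, Matrix.transpose_smul, hQ''symm.eq]
  have hST : Sᵀ = S := by rw [hSdef, Matrix.transpose_add, hAT, hBT]
  have hSiT : (S⁻¹)ᵀ = S⁻¹ := by rw [Matrix.transpose_nonsing_inv, hST]
  -- R and its inverse representations
  have hRform : A⁻¹ + B⁻¹ = A⁻¹ * S * B⁻¹ := by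
    rw [hSdef, Matrix.mul_add, Matrix.add_mul, Matrix.nonsing_inv_mul A hAdet,
      Matrix.mul_assoc, Matrix.mul_nonsing_inv B hBdet, Matrix.mul_one, Matrix.one_mul,
      add_comm]
  have hRform' : A⁻¹ + B⁻¹ = B⁻¹ * S * A⁻¹ := by
    rw [hSdef, Matrix.mul_add, Matrix.add_mul, Matrix.nonsing_inv_mul B hBdet,
      Matrix.mul_assoc, Matrix.mul_nonsing_inv A hAdet, Matrix.mul_one, Matrix.one_mul,
      add_comm]
  have hRinv1 : (A⁻¹ + B⁻¹)⁻¹ = B * S⁻¹ * A := by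
    rw [hRform, Matrix.mul_inv_rev, Matrix.mul_inv_rev, Matrix.nonsing_inv_nonsing_inv A hAdet,
      Matrix.nonsing_inv_nonsing_inv B hBdet, Matrix.mul_assoc]
  have hRinv2 : (A⁻¹ + B⁻¹)⁻¹ = A * S⁻¹ * B := by
    rw [hRform', Matrix.mul_inv_rev, Matrix.mul_inv_rev, Matrix.nonsing_inv_nonsing_inv A hAdet,
      Matrix.nonsing_inv_nonsing_inv B hBdet, Matrix.mul_assoc]
  -- rewrite the smul-mulVec term
  have hvec : ρ • (Q' *ᵥ θ') + (1 - ρ) • (Q'' *ᵥ θ'') = A *ᵥ θ' + B *ᵥ θ'' := by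
    rw [hA, hB, Matrix.smul_mulVec, Matrix.smul_mulVec]
  -- key vector identities
  have hθ'1 : θ' = S⁻¹ *ᵥ (S *ᵥ θ') := by
    rw [Matrix.mulVec_mulVec, Matrix.nonsing_inv_mul S hS, Matrix.one_mulVec]
  have hθ''1 : θ'' = S⁻¹ *ᵥ (S *ᵥ θ'') := by
    rw [Matrix.mulVec_mulVec, Matrix.nonsing_inv_mul S hS, Matrix.one_mulVec]
  have hv1 : S *ᵥ θ' - (A *ᵥ θ' + B *ᵥ θ'') = B *ᵥ ((a' - a'') • e) := by
    rw [← hθ, Matrix.mulVec_sub, hSdef, Matrix.add_mulVec]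
    abel
  have hv2 : S *ᵥ θ'' - (A *ᵥ θ' + B *ᵥ θ'') = A *ᵥ ((-(a' - a'')) • e) := by
    rw [neg_smul, ← hθ, Matrix.mulVec_neg, Matrix.mulVec_sub, hSdef, Matrix.add_mulVec]
    abel
  have key1 : θ' - S⁻¹ *ᵥ (A *ᵥ θ' + B *ᵥ θ'') = S⁻¹ *ᵥ (B *ᵥ ((a' - a'') • e)) := by
    nth_rewrite 1 [hθ'1]
    rw [← Matrix.mulVec_sub, hv1]
  have key2 : θ'' - S⁻¹ *ᵥ (A *ᵥ θ' + B *ᵥ θ'') = S⁻¹ *ᵥ (A *ᵥ ((-(a' - a'')) • e)) := by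
    nth_rewrite 1 [hθ''1]
    rw [← Matrix.mulVec_sub, hv2]
  constructor
  · rw [hvec, key1, Matrix.mulVec_smul, Matrix.mulVec_smul, smul_dotProduct,
      Matrix.mulVec_mulVec, dp_aux, Matrix.transpose_mul, hSiT, hBT, Matrix.mulVec_mulVec]
    have : B * S⁻¹ * Q' = ρ⁻¹ • (A⁻¹ + B⁻¹)⁻¹ := by
      rw [hRinv1, hA, Matrix.mul_smul, smul_smul, inv_mul_cancel₀ hρ0', one_smul]
    rw [this, Matrix.smul_mulVec, dotProduct_smul, smul_eq_mul]
    set X := e ⬝ᵥ (A⁻¹ + B⁻¹)⁻¹ *ᵥ e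
    rw [smul_eq_mul, div_eq_mul_inv]
    ring
  · rw [hvec, key2, Matrix.mulVec_smul, Matrix.mulVec_smul, smul_dotProduct,
      Matrix.mulVec_mulVec, dp_aux, Matrix.transpose_mul, hSiT, hAT, Matrix.mulVec_mulVec]
    have : A * S⁻¹ * Q'' = (1 - ρ)⁻¹ • (A⁻¹ + B⁻¹)⁻¹ := by
      rw [hRinv2, hB, Matrix.mul_smul, smul_smul, inv_mul_cancel₀ h1ρ, one_smul]
    rw [this, Matrix.smul_mulVec, dotProduct_smul, smul_eq_mul]
    set X := e ⬝ᵥ (A⁻¹ + B⁻¹)⁻¹ *ᵥ e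
    rw [smul_eq_mul, div_eq_mul_inv]
    ring
end

section
/- Let ψ ∈ ℝ and let f : [0,∞) → ℝ be continuous with f(t) → ψ as t → ∞. Then liminf_{T→∞} ( inf_{t ∈ (0,T]} (1/t)·∫_{T-t}^{T} f(s) ds ) ≥ ψ. -/
/-! The function `f` is bounded below on `[0, ∞)` by some `L` and is at least `c = ψ - ε/2`
beyond some `M ≥ 0`. In a window `[T - t, T]` only the part below `M` can pull the average
down; its length is at most `max (M - (T - t)) 0 ≤ t M / T`, so every window average is at
least `c - M (c - L) / T`, which exceeds `ψ - ε` for large `T`, uniformly in `t`. -/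

open MeasureTheory Filter Set

lemma mul_le_intervalIntegral_of_le_Ioo {f : ℝ → ℝ} {a b c : ℝ} (hab : a ≤ b)
    (hf : IntervalIntegrable f volume a b) (h : ∀ s ∈ Ioo a b, c ≤ f s) :
    (b - a) * c ≤ ∫ s in a..b, f s := by
  simpa [mul_comm] using
    intervalIntegral.integral_mono_on_of_le_Ioo hab intervalIntegrable_const hf h

lemma exists_le_forall_le_of_continuousOn_Ici {f : ℝ → ℝ} {a c M : ℝ}
    (hf : ContinuousOn f (Ici a)) (hM : ∀ s ≥ M, c ≤ f s) :
    ∃ L ≤ c, ∀ s ≥ a, L ≤ f s := by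
  obtain ⟨L, hL⟩ :=
    (isCompact_Icc (a := a) (b := M)).bddBelow_image (hf.mono Icc_subset_Ici_self)
  refine ⟨min L c, min_le_right _ _, fun s hs => ?_⟩
  rcases le_total s M with hsM | hMs
  · exact (min_le_left _ _).trans (hL ⟨s, ⟨hs, hsM⟩, rfl⟩)
  · exact (min_le_right _ _).trans (hM s hMs)

lemma mul_sub_le_intervalIntegral {f : ℝ → ℝ} {a b c L M : ℝ} (hab : a ≤ b)
    (hf : IntervalIntegrable f volume a b) (hLc : L ≤ c)
    (hL : ∀ s ∈ Icc a b, L ≤ f s) (hc : ∀ s ∈ Icc a b, M ≤ s → c ≤ f s) :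
    (b - a) * c - max (M - a) 0 * (c - L) ≤ ∫ s in a..b, f s := by
  -- `m` is where `[a, b]` enters `[M, ∞)` (or an endpoint, if it lies entirely on one side)
  set m := max a (min b M)
  have ham : a ≤ m := le_max_left _ _
  have hmb : m ≤ b := max_le hab (min_le_left _ _)
  have hm : m - a ≤ max (M - a) 0 := by
    rw [sub_le_iff_le_add]
    exact max_le (by linarith [le_max_right (M - a) 0])
      (by linarith [min_le_right b M, le_max_left (M - a) 0])
  have hf₁ : IntervalIntegrable f volume a m :=
    hf.mono_set (uIcc_subset_uIcc_left (mem_uIcc_of_le ham hmb))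
  have hf₂ : IntervalIntegrable f volume m b :=
    hf.mono_set (uIcc_subset_uIcc_right (mem_uIcc_of_le ham hmb))
  have hlow : (m - a) * L ≤ ∫ s in a..m, f s :=
    mul_le_intervalIntegral_of_le_Ioo ham hf₁ fun s hs => hL s ⟨hs.1.le, hs.2.le.trans hmb⟩
  have hhigh : (b - m) * c ≤ ∫ s in m..b, f s := by
    refine mul_le_intervalIntegral_of_le_Ioo hmb hf₂
      fun s hs => hc s ⟨ham.trans hs.1.le, hs.2.le⟩ ?_
    by_contra! hsM
    exact (lt_min hs.2 hsM).not_ge ((le_max_right _ _).trans hs.1.le)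
  rw [← intervalIntegral.integral_add_adjacent_intervals hf₁ hf₂]
  nlinarith

lemma max_sub_sub_zero_mul_le {M T t : ℝ} (hM : 0 ≤ M) (hMT : M ≤ T) (ht : 0 ≤ t)
    (htT : t ≤ T) :
    max (M - (T - t)) 0 * T ≤ t * M := by
  rcases le_total (M - (T - t)) 0 with h | h
  · rw [max_eq_right h, zero_mul]; positivity
  · rw [max_eq_left h]; nlinarith

lemma sub_div_le_backward_average {f : ℝ → ℝ} {c L M T t : ℝ} (hM : 0 ≤ M) (hMT : M ≤ T)
    (ht : 0 < t) (htT : t ≤ T) (hf : IntervalIntegrable f volume (T - t) T) (hLc : L ≤ c)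
    (hL : ∀ s ∈ Icc (T - t) T, L ≤ f s) (hc : ∀ s ∈ Icc (T - t) T, M ≤ s → c ≤ f s) :
    c - M * (c - L) / T ≤ (1 / t) * ∫ s in (T - t)..T, f s := by
  have hint := mul_sub_le_intervalIntegral (by linarith) hf hLc hL hc
  have hfrac := max_sub_sub_zero_mul_le hM hMT ht.le htT
  have hT : 0 < T := ht.trans_le htT
  rw [sub_sub_cancel] at hint
  have herr : max (M - (T - t)) 0 * (c - L) ≤ M * (c - L) * t / T := by
    rw [le_div_iff₀ hT]; nlinarith [sub_nonneg.2 hLc]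
  rw [one_div_mul_eq_div, le_div_iff₀ ht, sub_mul, div_mul_eq_mul_div]
  linarith

/-- Deterministic analysis lemma (continuous-time analogue of Lemma 7.7 of Pap–Szabó 2013)
used for the CIR change-point estimator: if `f : [0,∞) → ℝ` is continuous with
`f(t) → ψ` as `t → ∞`, then `liminf_{T→∞} inf_{t ∈ (0,T]} (1/t)·∫_{T−t}^T f(s) ds ≥ ψ`
(formulated as: for every `ε > 0`, eventually in `T`, the backward averages are all
at least `ψ − ε`). -/
theorem liminf_backward_averages_ge
    (ψ : ℝ) (f : ℝ → ℝ)
    (hf_cont : ContinuousOn f (Set.Ici (0 : ℝ)))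
    (hf_lim : Tendsto f atTop (nhds ψ)) :
    ∀ ε > 0, ∃ T₀ : ℝ, ∀ T ≥ T₀, ∀ t ∈ Set.Ioc (0 : ℝ) T,
      ψ - ε ≤ (1 / t) * ∫ s in (T - t)..T, f s := by
  intro ε hε
  obtain ⟨M, hM, hfM⟩ := (atTop_basis' 0).eventually_iff.mp
    (hf_lim.eventually (eventually_ge_nhds (by linarith : ψ - ε / 2 < ψ)))
  obtain ⟨L, hLc, hfL⟩ := exists_le_forall_le_of_continuousOn_Ici hf_cont hfM
  have hsmall : ∀ᶠ T in atTop, M ≤ T ∧ M * (ψ - ε / 2 - L) / T ≤ ε / 2 :=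
    (eventually_ge_atTop M).and <| (tendsto_const_nhds.div_atTop tendsto_id).eventually
      (eventually_le_nhds (half_pos hε))
  obtain ⟨T₀, hT₀⟩ := eventually_atTop.mp hsmall
  refine ⟨T₀, fun T hT t ⟨ht, htT⟩ => ?_⟩
  obtain ⟨hMT, herr⟩ := hT₀ T hT
  have hwindow : Icc (T - t) T ⊆ Ici 0 := fun s hs => le_trans (by linarith) hs.1
  have havg := sub_div_le_backward_average hM hMT ht htT
    ((hf_cont.mono hwindow).intervalIntegrable_of_Icc (by linarith)) hLc
    (fun s hs => hfL s (hwindow hs)) (fun _ _ hs => hfM hs)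
  linarith
end

section
/- Let α < β be real numbers, ε > 0, and let Z : [α,β] → ℝ be a nonnegative continuously differentiable function. If there exists t ∈ [α,β) with Z(t) ≥ ε, then ε ≤ Z(α) + ∫_α^β 1{ sup_{u∈[α,s]} Z(u) < ε } · Z′(s) ds, where 1{·} denotes the indicator. Moreover, in all cases Z(α) + ∫_α^β 1{ sup_{u∈[α,s]} Z(u) < ε } · Z′(s) ds ≥ 0. -/
open MeasureTheory

/-- Pathwise inequality (equation (epsilon_Z) of the paper) at the heart of the
continuous-time Hájek–Rényi maximal inequality: for a nonnegative continuously
differentiable `Z` on `[α,β]`, if `Z(t) ≥ ε` for some `t ∈ [α,β)`, then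
`ε ≤ Z(α) + ∫_α^β 1{sup_{u∈[α,s]} Z(u) < ε}·Z′(s) ds`, and in all cases the right-hand
side is nonnegative. -/
theorem pathwise_hitting_inequality
    (α β ε : ℝ) (hαβ : α < β) (hε : 0 < ε)
    (Z Z' : ℝ → ℝ)
    (hZ_nonneg : ∀ t ∈ Set.Icc α β, 0 ≤ Z t)
    (hZ_deriv : ∀ t ∈ Set.Icc α β, HasDerivWithinAt Z (Z' t) (Set.Icc α β) t)
    (hZ'_cont : ContinuousOn Z' (Set.Icc α β)) :
    ((∃ t ∈ Set.Ico α β, ε ≤ Z t) →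
        ε ≤ Z α + ∫ s in α..β, (if sSup (Z '' Set.Icc α s) < ε then Z' s else 0))
    ∧ 0 ≤ Z α + ∫ s in α..β, (if sSup (Z '' Set.Icc α s) < ε then Z' s else 0) := by
  have hαβ' : α ≤ β := hαβ.le
  have hZcont : ContinuousOn Z (Set.Icc α β) := fun t ht =>
    (hZ_deriv t ht).continuousWithinAt
  -- if all values on [α,s] are < ε then the sup is < ε
  have hM_lt : ∀ s ∈ Set.Icc α β, (∀ u ∈ Set.Icc α s, Z u < ε) →
      sSup (Z '' Set.Icc α s) < ε := by
    intro s hs h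
    have hcomp : IsCompact (Z '' Set.Icc α s) :=
      isCompact_Icc.image_of_continuousOn (hZcont.mono (Set.Icc_subset_Icc_right hs.2))
    have hne : (Z '' Set.Icc α s).Nonempty :=
      ⟨Z α, ⟨α, ⟨le_refl α, hs.1⟩, rfl⟩⟩
    obtain ⟨u, huI, hue⟩ := hcomp.sSup_mem hne
    rw [← hue]
    exact h u huI
  -- FTC on [α,c]
  have hFTC : ∀ c ∈ Set.Icc α β, (∫ s in α..c, Z' s) = Z c - Z α := by
    intro c hc
    apply intervalIntegral.integral_eq_sub_of_hasDeriv_right_of_le hc.1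
    · exact hZcont.mono (Set.Icc_subset_Icc_right hc.2)
    · intro x hx
      have hx' : x ∈ Set.Ioo α β := ⟨hx.1, lt_of_lt_of_le hx.2 hc.2⟩
      have hd : HasDerivAt Z (Z' x) x :=
        (hZ_deriv x (Set.Ioo_subset_Icc_self hx')).hasDerivAt
          (Icc_mem_nhds hx'.1 hx'.2)
      exact hd.hasDerivWithinAt
    · exact (hZ'_cont.mono (Set.Icc_subset_Icc_right hc.2)).intervalIntegrable_of_Icc hc.1
  by_cases hS : ∃ s ∈ Set.Icc α β, ε ≤ Z s
  · -- hitting case: let τ be the first hitting time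
    set S : Set ℝ := Set.Icc α β ∩ Z ⁻¹' Set.Ici ε with hSdef
    have hSclosed : IsClosed S :=
      hZcont.preimage_isClosed_of_isClosed isClosed_Icc isClosed_Ici
    have hSne : S.Nonempty := by
      obtain ⟨s, hs1, hs2⟩ := hS; exact ⟨s, hs1, hs2⟩
    have hSbdd : BddBelow S := ⟨α, fun x hx => hx.1.1⟩
    set τ := sInf S with hτdef
    have hτS : τ ∈ S := hSclosed.csInf_mem hSne hSbdd
    have hτIcc : τ ∈ Set.Icc α β := hτS.1
    have hτε : ε ≤ Z τ := hτS.2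
    have hτmin : ∀ s ∈ Set.Icc α β, s < τ → Z s < ε := by
      intro s hs hlt
      by_contra h
      push_neg at h
      exact absurd (csInf_le hSbdd ⟨hs, h⟩) (not_le.mpr hlt)
    -- the integrand coincides a.e. with the indicator of {x ≤ τ} applied to Z'
    have hae : ∫ s in α..β, (if sSup (Z '' Set.Icc α s) < ε then Z' s else 0)
        = ∫ s in α..β, Set.indicator {x | x ≤ τ} Z' s := by
      apply intervalIntegral.integral_congr_ae
      have hne : ∀ᵐ (x : ℝ), x ≠ τ := by
        rw [MeasureTheory.ae_iff]
        simp only [ne_eq, not_not, Set.setOf_eq_eq_singleton, Real.volume_singleton]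
      filter_upwards [hne] with x hxne hx
      rw [Set.uIoc_of_le hαβ'] at hx
      have hxIcc : x ∈ Set.Icc α β := ⟨hx.1.le, hx.2⟩
      rcases lt_or_ge x τ with hlt | hle
      · rw [if_pos, Set.indicator_of_mem (show x ∈ {x | x ≤ τ} from hlt.le)]
        apply hM_lt x hxIcc
        intro u hu
        exact hτmin u ⟨hu.1, hu.2.trans hxIcc.2⟩ (lt_of_le_of_lt hu.2 hlt)
      · have hτx : τ < x := lt_of_le_of_ne hle (Ne.symm hxne)
        have hbdd : BddAbove (Z '' Set.Icc α x) :=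
          (isCompact_Icc.image_of_continuousOn
            (hZcont.mono (Set.Icc_subset_Icc_right hxIcc.2))).bddAbove
        have hge : ε ≤ sSup (Z '' Set.Icc α x) :=
          hτε.trans (le_csSup hbdd ⟨τ, ⟨hτIcc.1, hτx.le⟩, rfl⟩)
        rw [if_neg (not_lt.mpr hge)]
        exact (Set.indicator_of_notMem (show x ∉ {x | x ≤ τ} from not_le.mpr hτx) Z').symm
    rw [hae, intervalIntegral.integral_indicator hτIcc, hFTC τ hτIcc]
    constructor
    · intro _; linarith
    · linarith
  · -- no hitting: integrand is Z' everywhere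
    push_neg at hS
    have hcong : Set.EqOn (fun s => if sSup (Z '' Set.Icc α s) < ε then Z' s else 0) Z'
        (Set.uIcc α β) := by
      intro s hs
      rw [Set.uIcc_of_le hαβ'] at hs
      simp only
      rw [if_pos]
      exact hM_lt s hs fun u hu => hS u ⟨hu.1, hu.2.trans hs.2⟩
    rw [intervalIntegral.integral_congr hcong, hFTC β ⟨hαβ', le_refl β⟩]
    constructor
    · rintro ⟨t, ht, hεt⟩
      exact absurd hεt (not_le.mpr (hS t ⟨ht.1, ht.2.le⟩))
    · linarith [hZ_nonneg β ⟨hαβ', le_refl β⟩]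
end
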